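/- Let D be a GCD domain with fraction field K and let A ∈ D^{n×n} with det A ≠ 0. Suppose R ∈ D^{n×n} is upper triangular with nonzero diagonal entries R_{ii} = p_i, set D_g = diag(p_1, p_1p_2, p_2p_3, …, p_{n−1}p_n), and suppose Θ ∈ D^{n×n} is such that AᵗA = Rᵗ · D_g^{−1} · R and A = Θ · D_g^{−1} · R hold over K. Then for every k with 1 ≤ k ≤ n, the k-th determinantal divisor d_k* of A divides every entry of the k-th row of R and every entry of the k-th column of Θ; moreover, for 2 ≤ k ≤ n, the product d_{k−1}* · d_k* divides the (k,k) entry p_{k−1}p_k of D_g. -/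

import Mathlib

/-!
Over `K` the two relations give `AᵀΘ = Rᵀ`, so row `k` of `R` is a `D`-combination of the
entries of column `k` of `Θ`, and `d_{k-1} d_k ∣ p_{k-1} p_k` follows from the pivots.
For column `k` of `Θ`, triangularity of `R` lets one restrict the decomposition to the leading
`k + 1` columns of `A`, where `k` becomes the last index. There `Θ = A G⁻¹ Rᵀ` with `G = AᵀA`,
the diagonal of `D_g` telescopes to `det G = p_k`, and Cramer's rule turns `Θ_{ik}` into the
determinant of `G` with its last row replaced by row `i` of `A`. That matrix is `B A_k` with `B`
integral and `A_k` the leading `k + 1` columns of `A`, so by multilinearity of `det` its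
determinant is a `D`-combination of `(k + 1)`-minors of `A`.
-/

open Matrix

/-- The diagonal matrix `D_g = diag(p₁, p₁p₂, p₂p₃, …, p_{n−1}p_n)` built from the
pivots `p : Fin n → D`. -/
def bareissDiag {D : Type*} [CommRing D] {n : ℕ} (p : Fin n → D) :
    Matrix (Fin n) (Fin n) D :=
  Matrix.diagonal fun i =>
    (if (i : ℕ) = 0 then 1
      else p ⟨(i : ℕ) - 1, lt_of_le_of_lt (Nat.sub_le _ _) i.isLt⟩) * p i

namespace Matrix

variable {S : Type*} [CommRing S]

-- A weak form of the Cauchy–Binet formula.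
theorem dvd_det_mul_of_forall_dvd_det_submatrix {m ι : Type*} [Fintype m] [DecidableEq m]
    [Fintype ι] (B : Matrix m ι S) (A : Matrix ι m S) {c : S}
    (h : ∀ f : m → ι, c ∣ (A.submatrix f id).det) : c ∣ (B * A).det := by
  have hrows : (B * A).det = detRowAlternating fun a => ∑ r, B a r • A r := by
    congr 1
    ext a b
    simp [mul_apply]
  have hexpand := (detRowAlternating (R := S) (n := m)).toMultilinearMap.map_sum
    fun a r => B a r • A r
  simp only [AlternatingMap.coe_multilinearMap] at hexpand
  rw [hrows, hexpand]
  refine Finset.dvd_sum fun f _ => ?_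
  have hsmul := (detRowAlternating (R := S) (n := m)).toMultilinearMap.map_smul_univ
    (fun a => B a (f a)) fun a => A (f a)
  simp only [AlternatingMap.coe_multilinearMap] at hsmul
  rw [hsmul, smul_eq_mul]
  exact (h f).mul_left _

theorem dvd_det_updateRow_transpose_mul_self {ι m : Type*} [Fintype ι] [DecidableEq ι]
    [Fintype m] [DecidableEq m] (A : Matrix ι m S) (l : m) (i : ι) {c : S}
    (h : ∀ f : m → ι, c ∣ (A.submatrix f id).det) : c ∣ ((Aᵀ * A).updateRow l (A i)).det := by
  have hfactor : (Aᵀ * A).updateRow l (A i) = Aᵀ.updateRow l (Pi.single i 1) * A := by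
    rw [updateRow_mul, single_one_vecMul]
    rfl
  rw [hfactor]
  exact dvd_det_mul_of_forall_dvd_det_submatrix _ _ h

theorem dvd_det_submatrix_of_forall_strictMono {α κ : Type*} [LinearOrder α] {k : ℕ}
    (A : Matrix α κ S) (J : Fin k → κ) {c : S}
    (h : ∀ I : Fin k → α, StrictMono I → c ∣ (A.submatrix I J).det) (f : Fin k → α) :
    c ∣ (A.submatrix f J).det := by
  by_cases hf : Function.Injective f
  · have hsort : StrictMono (f ∘ Tuple.sort f) :=
      (Tuple.monotone_sort f).strictMono_of_injective (hf.comp (Tuple.sort f).injective)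
    have hperm : A.submatrix f J = (A.submatrix (f ∘ Tuple.sort f) J).submatrix
        (Tuple.sort f).symm id := by
      ext a b
      simp
    rw [hperm, det_permute]
    exact (h _ hsort).mul_left _
  · obtain ⟨a, b, hab, hne⟩ := Function.not_injective_iff.mp hf
    rw [det_zero_of_row_eq hne (by ext; simp [hab])]
    exact dvd_zero c

theorem submatrix_castLE_mul_of_isUpperTriangular {ι κ : Type*} {n m : ℕ} (h : m ≤ n)
    (X : Matrix ι (Fin n) S) {U : Matrix (Fin n) (Fin n) S} (hU : U.IsUpperTriangular)
    (e : κ → ι) :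
    (X * U).submatrix e (Fin.castLE h) =
      X.submatrix e (Fin.castLE h) * U.submatrix (Fin.castLE h) (Fin.castLE h) := by
  ext a b
  refine (Fintype.sum_of_injective _ (Fin.castLE_injective h) _ _ ?_ fun _ => rfl).symm
  intro r hr
  have hmr : m ≤ r := by
    by_contra! hrm
    exact hr ⟨⟨r, hrm⟩, rfl⟩
  exact mul_eq_zero_of_right _
    (hU (show Fin.castLE h b < r from Fin.lt_def.mpr (lt_of_lt_of_le b.isLt hmr)))

theorem inv_diagonal_of_ne_zero {ι K : Type*} [Fintype ι] [DecidableEq ι] [Field K] {d : ι → K}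
    (hd : ∀ i, d i ≠ 0) : (diagonal d)⁻¹ = diagonal fun i => (d i)⁻¹ := by
  refine inv_eq_left_inv ?_
  rw [diagonal_mul_diagonal, ← diagonal_one]
  exact congrArg diagonal (funext fun i => inv_mul_cancel₀ (hd i))

theorem submatrix_inv_diagonal {ι κ K : Type*} [Fintype ι] [DecidableEq ι] [Fintype κ]
    [DecidableEq κ] [Field K] {d : ι → K} (hd : ∀ i, d i ≠ 0) {e : κ → ι}
    (he : Function.Injective e) : (diagonal d)⁻¹.submatrix e e = (diagonal (d ∘ e))⁻¹ := by
  rw [inv_diagonal_of_ne_zero hd, inv_diagonal_of_ne_zero (d := d ∘ e) fun i => hd (e i),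
    submatrix_diagonal _ _ he]
  rfl

end Matrix

section bareissDiag

variable {S : Type*} [CommRing S]

theorem bareissDiag_map {T : Type*} [CommRing T] {n : ℕ} (f : S →+* T) (p : Fin n → S) :
    (bareissDiag p).map f = bareissDiag (f ∘ p) := by
  rw [bareissDiag, diagonal_map (map_zero f), bareissDiag]
  congr 1
  ext i
  split_ifs <;> simp

theorem bareissDiag_apply_self_ne_zero [IsDomain S] {n : ℕ} {p : Fin n → S}
    (hp : ∀ i, p i ≠ 0) (i : Fin n) : bareissDiag p i i ≠ 0 := by
  rw [bareissDiag, diagonal_apply_eq]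
  refine mul_ne_zero ?_ (hp i)
  split_ifs
  · exact one_ne_zero
  · exact hp _

theorem det_bareissDiag_ne_zero [IsDomain S] {n : ℕ} {p : Fin n → S} (hp : ∀ i, p i ≠ 0) :
    (bareissDiag p).det ≠ 0 := by
  rw [det_of_isUpperTriangular (M := bareissDiag p) (blockTriangular_diagonal _)]
  exact Finset.prod_ne_zero_iff.mpr fun i _ => bareissDiag_apply_self_ne_zero hp i

theorem isUpperTriangular_inv_bareissDiag {n : ℕ} (p : Fin n → S) :
    (bareissDiag p)⁻¹.IsUpperTriangular := by
  rw [bareissDiag, inv_diagonal]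
  exact blockTriangular_diagonal _

theorem bareissDiag_submatrix_castLE {n m : ℕ} (h : m ≤ n) (p : Fin n → S) :
    (bareissDiag p).submatrix (Fin.castLE h) (Fin.castLE h) = bareissDiag (p ∘ Fin.castLE h) := by
  rw [bareissDiag, submatrix_diagonal _ _ (Fin.castLE_injective h)]
  rfl

theorem inv_bareissDiag_submatrix_castLE {K : Type*} [Field K] {n m : ℕ} (h : m ≤ n)
    {p : Fin n → K} (hp : ∀ i, p i ≠ 0) :
    (bareissDiag p)⁻¹.submatrix (Fin.castLE h) (Fin.castLE h) =
      (bareissDiag (p ∘ Fin.castLE h))⁻¹ := by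
  have hdiag := bareissDiag_apply_self_ne_zero hp
  rw [← bareissDiag_submatrix_castLE, bareissDiag] at *
  simp only [diagonal_apply_eq] at hdiag
  rw [submatrix_inv_diagonal hdiag (Fin.castLE_injective h),
    submatrix_diagonal _ _ (Fin.castLE_injective h)]

theorem det_bareissDiag_succ {m : ℕ} (p : Fin (m + 2) → S) :
    (bareissDiag p).det =
      (bareissDiag (p ∘ Fin.castSucc)).det * (p (Fin.last m).castSucc * p (Fin.last (m + 1))) := by
  rw [bareissDiag, bareissDiag, det_diagonal, det_diagonal, Fin.prod_univ_castSucc]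
  rfl

theorem det_bareissDiag_mul_last {m : ℕ} (p : Fin (m + 1) → S) :
    (bareissDiag p).det * p (Fin.last m) = (∏ i, p i) ^ 2 := by
  induction m with
  | zero => simp [bareissDiag, sq]
  | succ m ih =>
    have hcast := ih (p ∘ Fin.castSucc)
    simp only [Function.comp_apply] at hcast
    rw [det_bareissDiag_succ, Fin.prod_univ_castSucc]
    linear_combination p (Fin.last (m + 1)) ^ 2 * hcast

end bareissDiag

structure IsFractionFreeQR {K ι : Type*} [Field K] [Fintype ι] {m : ℕ}
    (A Θ : Matrix ι (Fin m) K) (R : Matrix (Fin m) (Fin m) K) : Prop where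
  isUpperTriangular : R.IsUpperTriangular
  diag_ne_zero : ∀ i, R i i ≠ 0
  gram : Aᵀ * A = Rᵀ * (bareissDiag fun i => R i i)⁻¹ * R
  eq_mul : A = Θ * (bareissDiag fun i => R i i)⁻¹ * R

namespace IsFractionFreeQR

variable {K ι : Type*} [Field K] [Fintype ι] {m : ℕ} {A Θ : Matrix ι (Fin m) K}
  {R : Matrix (Fin m) (Fin m) K}

theorem isUnit_det_inv_bareissDiag_mul (h : IsFractionFreeQR A Θ R) :
    IsUnit ((bareissDiag fun i => R i i)⁻¹ * R).det := by
  rw [det_mul, det_nonsing_inv, Ring.inverse_eq_inv', det_of_isUpperTriangular h.isUpperTriangular]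
  exact (mul_ne_zero (inv_ne_zero (det_bareissDiag_ne_zero h.diag_ne_zero))
    (Finset.prod_ne_zero_iff.mpr fun i _ => h.diag_ne_zero i)).isUnit

theorem transpose_mul_eq (h : IsFractionFreeQR A Θ R) : Aᵀ * Θ = Rᵀ := by
  have hP := h.isUnit_det_inv_bareissDiag_mul
  calc Aᵀ * Θ = Aᵀ * Θ * ((bareissDiag fun i => R i i)⁻¹ * R) *
        ((bareissDiag fun i => R i i)⁻¹ * R)⁻¹ := (mul_nonsing_inv_cancel_right _ _ hP).symm
    _ = Rᵀ := by
      rw [Matrix.mul_assoc Aᵀ, ← Matrix.mul_assoc Θ, ← h.eq_mul, h.gram, Matrix.mul_assoc Rᵀ,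
        mul_nonsing_inv_cancel_right _ _ hP]

theorem submatrix_castLE (h : IsFractionFreeQR A Θ R) {k : ℕ} (hk : k ≤ m) :
    IsFractionFreeQR (A.submatrix id (Fin.castLE hk)) (Θ.submatrix id (Fin.castLE hk))
      (R.submatrix (Fin.castLE hk) (Fin.castLE hk)) := by
  have hD := inv_bareissDiag_submatrix_castLE hk h.diag_ne_zero
  have hR := h.isUpperTriangular
  refine ⟨fun i j hij => hR hij, fun i => h.diag_ne_zero _, ?_, ?_⟩
  · calc (A.submatrix id (Fin.castLE hk))ᵀ * A.submatrix id (Fin.castLE hk)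
          = (Aᵀ * A).submatrix (Fin.castLE hk) (Fin.castLE hk) := rfl
      _ = _ := by
        rw [h.gram, submatrix_castLE_mul_of_isUpperTriangular _ _ hR,
          submatrix_castLE_mul_of_isUpperTriangular _ _ (isUpperTriangular_inv_bareissDiag _),
          hD, transpose_submatrix]
        rfl
  · conv_lhs => rw [h.eq_mul]
    rw [submatrix_castLE_mul_of_isUpperTriangular _ _ hR,
      submatrix_castLE_mul_of_isUpperTriangular _ _ (isUpperTriangular_inv_bareissDiag _), hD]
    rfl

theorem det_gram {A Θ : Matrix ι (Fin (m + 1)) K} {R : Matrix (Fin (m + 1)) (Fin (m + 1)) K}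
    (h : IsFractionFreeQR A Θ R) : (Aᵀ * A).det = R (Fin.last m) (Fin.last m) := by
  have hD := det_bareissDiag_mul_last fun i => R i i
  have hD0 := det_bareissDiag_ne_zero h.diag_ne_zero
  rw [h.gram, det_mul, det_mul, det_transpose, det_nonsing_inv, Ring.inverse_eq_inv',
    det_of_isUpperTriangular h.isUpperTriangular]
  field_simp
  linear_combination -hD

theorem apply_last_eq_det_updateRow [DecidableEq ι] {A Θ : Matrix ι (Fin (m + 1)) K}
    {R : Matrix (Fin (m + 1)) (Fin (m + 1)) K} (h : IsFractionFreeQR A Θ R) (i : ι) :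
    Θ i (Fin.last m) = ((Aᵀ * A).updateRow (Fin.last m) (A i)).det := by
  set P := (bareissDiag fun i => R i i)⁻¹ * R
  have hP : IsUnit P.det := h.isUnit_det_inv_bareissDiag_mul
  have hG : IsUnit (Aᵀ * A).det := by
    rw [h.det_gram]
    exact (h.diag_ne_zero _).isUnit
  have hΘ : Θ = A * (Aᵀ * A)⁻¹ * Rᵀ := by
    have hΘP : Θ = A * P⁻¹ := by
      rw [h.eq_mul, Matrix.mul_assoc Θ, mul_nonsing_inv_cancel_right _ _ hP]
    have hRP : Rᵀ = Aᵀ * A * P⁻¹ := by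
      rw [h.gram, Matrix.mul_assoc Rᵀ, mul_nonsing_inv_cancel_right _ _ hP]
    rw [hRP, Matrix.mul_assoc, ← Matrix.mul_assoc (Aᵀ * A)⁻¹, nonsing_inv_mul _ hG,
      Matrix.one_mul, ← hΘP]
  -- `R` is upper triangular, so the last column of `Rᵀ` is `R_last,last • e_last`.
  have hcol : Θ i (Fin.last m) = (A * (Aᵀ * A)⁻¹) i (Fin.last m) * (Aᵀ * A).det := by
    rw [h.det_gram]
    conv_lhs => rw [hΘ, mul_apply]
    refine Finset.sum_eq_single _ (fun b _ hb => ?_) (by simp)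
    exact mul_eq_zero_of_right _ (h.isUpperTriangular (Fin.lt_last_iff_ne_last.mpr hb))
  rw [hcol, mul_comm, ← cramer_transpose_apply, ← det_smul_inv_vecMul_eq_cramer_transpose _ _ hG]
  rfl

end IsFractionFreeQR

theorem stmt15_general {D K : Type*} [CommRing D] [Field K]
    [Algebra D K] [IsFractionRing D K] {n : ℕ} (A R Θ : Matrix (Fin n) (Fin n) D)
    (hRtri : ∀ i j : Fin n, (j : ℕ) < (i : ℕ) → R i j = 0)
    (hp : ∀ i : Fin n, R i i ≠ 0)
    (hGram : (Aᵀ * A).map (algebraMap D K) =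
      (Rᵀ).map (algebraMap D K) *
        ((bareissDiag fun i : Fin n => R i i).map (algebraMap D K))⁻¹ *
        R.map (algebraMap D K))
    (hQR : A.map (algebraMap D K) =
      Θ.map (algebraMap D K) *
        ((bareissDiag fun i : Fin n => R i i).map (algebraMap D K))⁻¹ *
        R.map (algebraMap D K))
    (d : Fin n → D)
    (hd1 : ∀ (k : Fin n) (I J : Fin ((k : ℕ) + 1) → Fin n), StrictMono I →
      StrictMono J → d k ∣ (A.submatrix I J).det) :
    (∀ k j : Fin n, d k ∣ R k j) ∧
    (∀ k i : Fin n, d k ∣ Θ i k) ∧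
    (∀ k : Fin n, 0 < (k : ℕ) →
      d ⟨(k : ℕ) - 1, lt_of_le_of_lt (Nat.sub_le _ _) k.isLt⟩ * d k ∣
        R ⟨(k : ℕ) - 1, lt_of_le_of_lt (Nat.sub_le _ _) k.isLt⟩
            ⟨(k : ℕ) - 1, lt_of_le_of_lt (Nat.sub_le _ _) k.isLt⟩ * R k k) := by
  set φ := algebraMap D K
  have hφ : Function.Injective φ := IsFractionRing.injective D K
  have hDg : (bareissDiag fun i => R.map φ i i) = (bareissDiag fun i => R i i).map φ :=
    (bareissDiag_map φ _).symm
  have hK : IsFractionFreeQR (A.map φ) (Θ.map φ) (R.map φ) := by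
    refine ⟨fun i j hij => by simp [hRtri i j hij], fun i => (map_ne_zero_iff _ hφ).mpr (hp i),
      ?_, ?_⟩
    · rw [hDg, ← transpose_map, ← transpose_map, ← Matrix.map_mul]
      exact hGram
    · rw [hDg]
      exact hQR
  have hRΘ : ∀ k j, R k j = ∑ i, Θ i k * A i j := by
    have hD : Aᵀ * Θ = Rᵀ := by
      refine map_injective hφ ?_
      show (Aᵀ * Θ).map φ = Rᵀ.map φ
      rw [Matrix.map_mul, transpose_map, transpose_map]
      exact hK.transpose_mul_eq
    intro k j
    rw [← transpose_apply R, ← hD, mul_apply]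
    simp only [transpose_apply, mul_comm]
  have hΘ : ∀ k i, d k ∣ Θ i k := by
    intro k i
    set e := Fin.castLE k.isLt
    have hcol : Θ i k =
        (((A.submatrix id e)ᵀ * A.submatrix id e).updateRow (Fin.last k) (A i ∘ e)).det := by
      apply hφ
      rw [RingHom.map_det, RingHom.mapMatrix_apply, map_updateRow, Matrix.map_mul, transpose_map]
      exact (hK.submatrix_castLE k.isLt).apply_last_eq_det_updateRow i
    rw [hcol]
    exact dvd_det_updateRow_transpose_mul_self _ _ _ fun f =>
      dvd_det_submatrix_of_forall_strictMono A e
        (fun I hI => hd1 k I e hI (Fin.strictMono_castLE _)) f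
  have hR : ∀ k j, d k ∣ R k j := fun k j =>
    hRΘ k j ▸ Finset.dvd_sum fun i _ => (hΘ k i).mul_right _
  exact ⟨hR, hΘ, fun k _ => mul_dvd_mul (hR _ _) (hR k k)⟩

/-- (Theorem 14 of the paper.)  Let `D` be a GCD domain with
fraction field `K`, `A ∈ D^{n×n}` with `det A ≠ 0`, and suppose
`Aᵀ·A = Rᵀ·D_g⁻¹·R` and `A = Θ·D_g⁻¹·R` over `K`, where `R` is upper triangular
with nonzero diagonal pivots `p_i = R i i` and `D_g = diag(p₁, p₁p₂, …)`.
If `d k` is a gcd of all `(k+1) × (k+1)` minors of `A` (0-indexed determinantal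
divisors), then `d k` divides every entry of the `k`-th row of `R` and of the
`k`-th column of `Θ`, and for `k ≥ 1` the product `d (k-1) * d k` divides the
`(k,k)` entry `p_{k-1} p_k` of `D_g`. -/
theorem stmt15 {D K : Type*} [CommRing D] [IsDomain D] [GCDMonoid D] [Field K]
    [Algebra D K] [IsFractionRing D K] {n : ℕ} (A R Θ : Matrix (Fin n) (Fin n) D)
    (hdet : A.det ≠ 0)
    (hRtri : ∀ i j : Fin n, (j : ℕ) < (i : ℕ) → R i j = 0)
    (hp : ∀ i : Fin n, R i i ≠ 0)
    (hGram : (Aᵀ * A).map (algebraMap D K) =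
      (Rᵀ).map (algebraMap D K) *
        ((bareissDiag fun i : Fin n => R i i).map (algebraMap D K))⁻¹ *
        R.map (algebraMap D K))
    (hQR : A.map (algebraMap D K) =
      Θ.map (algebraMap D K) *
        ((bareissDiag fun i : Fin n => R i i).map (algebraMap D K))⁻¹ *
        R.map (algebraMap D K))
    (d : Fin n → D)
    (hd1 : ∀ (k : Fin n) (I J : Fin ((k : ℕ) + 1) → Fin n), StrictMono I →
      StrictMono J → d k ∣ (A.submatrix I J).det)
    (hd2 : ∀ (k : Fin n) (c : D), (∀ I J : Fin ((k : ℕ) + 1) → Fin n, StrictMono I →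
      StrictMono J → c ∣ (A.submatrix I J).det) → c ∣ d k) :
    (∀ k j : Fin n, d k ∣ R k j) ∧
    (∀ k i : Fin n, d k ∣ Θ i k) ∧
    (∀ k : Fin n, 0 < (k : ℕ) →
      d ⟨(k : ℕ) - 1, lt_of_le_of_lt (Nat.sub_le _ _) k.isLt⟩ * d k ∣
        R ⟨(k : ℕ) - 1, lt_of_le_of_lt (Nat.sub_le _ _) k.isLt⟩
            ⟨(k : ℕ) - 1, lt_of_le_of_lt (Nat.sub_le _ _) k.isLt⟩ * R k k) :=
  stmt15_general A R Θ hRtri hp hGram hQR d hd1
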